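/- For any weight w with dequantized value α satisfying |w - α| ≤ I_max ≤ E, and any λ ∈ [0,1], the λ-scaled heuristic expansion interval (defined by: (α, w) if I ≥ λI_max; (α, w + λI_max − I) if λI_max/2 ≤ I < λI_max; (w − λI_max/2, w + λI_max/2) if I < λI_max/2, where I = w − α and w.l.o.g. α < w) is contained in the exact preserving interval (α − E, α + E). -/
import Mathlib


/-- Soundness of the λ-scaled heuristic expansion: in every case the expanded
interval is contained in the exact preserving interval `(α - E, α + E)`. -/
theorem stmt_3 (w α E Imax lam : ℝ) (hαw : α < w) (hI : w - α ≤ Imax)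
    (hE : Imax ≤ E) (hlam0 : 0 ≤ lam) (hlam1 : lam ≤ 1) :
    (if lam * Imax ≤ w - α then Set.Ioo α w
     else if lam * Imax / 2 ≤ w - α then Set.Ioo α (w + lam * Imax - (w - α))
     else Set.Ioo (w - lam * Imax / 2) (w + lam * Imax / 2))
      ⊆ Set.Ioo (α - E) (α + E) := by
  have hIm : 0 < Imax := lt_of_lt_of_le (by linarith) hI
  split_ifs with h1 h2 <;> apply Set.Ioo_subset_Ioo <;> nlinarith
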